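/- arXiv:1412.6746 — 3 statements merged into one kernel-verified Lean document; each statement's English description precedes it below -/
import Mathlib

section
/- Let a > 0 and define the sequence (u_v) by u_1 = 1/(a+1) and u_v = ((v-1)a/(va+1)) u_{v-1} for v > 1. Then Σ_{v=1}^{∞} u_v = 1, i.e., (u_v) is a probability distribution on the positive integers. -/
/-!
Writing `p k = 1 / ((k + 1) a + 1)` and `t n = ∏_{k < n} (1 - p k)`, the recursion unwinds to
`u (n + 1) = t n * p n = t n - t (n + 1)`, so the series telescopes to `t 0 - lim t = 1 - lim t`.
Since `1 - x ≤ exp (-x)`, `t n ≤ exp (-∑_{k < n} p k)`, and `∑ p k` diverges by comparison with the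
harmonic series; hence `t n → 0`.
-/

open Finset Filter Topology

theorem hasSum_sub_succ_of_antitone {t : ℕ → ℝ} {l : ℝ} (ht : Antitone t)
    (hl : Tendsto t atTop (𝓝 l)) : HasSum (fun n => t n - t (n + 1)) (t 0 - l) := by
  rw [hasSum_iff_tendsto_nat_of_nonneg fun n => sub_nonneg.2 (ht n.le_succ)]
  simpa only [sum_range_sub'] using tendsto_const_nhds.sub hl

theorem tendsto_prod_range_one_sub_of_tendsto_sum {p : ℕ → ℝ} (hp : ∀ k, p k ≤ 1)
    (hsum : Tendsto (fun n => ∑ k ∈ range n, p k) atTop atTop) :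
    Tendsto (fun n => ∏ k ∈ range n, (1 - p k)) atTop (𝓝 0) := by
  refine tendsto_of_tendsto_of_tendsto_of_le_of_le tendsto_const_nhds
    (Real.tendsto_exp_neg_atTop_nhds_zero.comp hsum)
    (fun n => prod_nonneg fun k _ => sub_nonneg.2 (hp k)) fun n => ?_
  calc ∏ k ∈ range n, (1 - p k)
      ≤ ∏ k ∈ range n, Real.exp (-p k) :=
        prod_le_prod (fun k _ => sub_nonneg.2 (hp k)) fun k _ => Real.one_sub_le_exp_neg _
    _ = Real.exp (-∑ k ∈ range n, p k) := by rw [← Real.exp_sum, sum_neg_distrib]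

theorem tendsto_sum_range_one_div_succ_mul_add_atTop {a b : ℝ} (ha : 0 < a) (hb : 0 ≤ b) :
    Tendsto (fun n => ∑ k ∈ range n, 1 / ((k + 1 : ℝ) * a + b)) atTop atTop := by
  have hharmonic := (Real.tendsto_sum_range_one_div_nat_succ_atTop).const_mul_atTop
    (inv_pos.2 (add_pos_of_pos_of_nonneg ha hb))
  refine tendsto_atTop_mono (fun n => ?_) hharmonic
  rw [mul_sum]
  refine sum_le_sum fun k _ => ?_
  rw [inv_mul_eq_div, div_div]
  gcongr
  nlinarith [k.cast_nonneg (α := ℝ)]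

theorem stmt_3 (a : ℝ) (ha : 0 < a) (u : ℕ → ℝ)
    (h1 : u 1 = 1 / (a + 1))
    (hrec : ∀ v : ℕ, 1 < v → u v = ((v - 1 : ℝ) * a / (v * a + 1)) * u (v - 1)) :
    HasSum (fun v : ℕ => u (v + 1)) 1 := by
  set p : ℕ → ℝ := fun k => 1 / ((k + 1) * a + 1) with hp
  set t : ℕ → ℝ := fun n => ∏ k ∈ range n, (1 - p k) with ht
  have hp_nonneg (k : ℕ) : 0 ≤ p k := by positivity
  have hp_le_one (k : ℕ) : p k ≤ 1 := by
    rw [hp, div_le_one (by positivity)]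
    nlinarith [k.cast_nonneg (α := ℝ)]
  have ht_succ (n : ℕ) : t (n + 1) = t n * (1 - p n) := prod_range_succ _ _
  have hclosed (n : ℕ) : u (n + 1) = t n * p n := by
    induction n with
    | zero => simp [h1, ht, hp]
    | succ n ih =>
      rw [hrec (n + 2) (by omega), show n + 2 - 1 = n + 1 from rfl, ih, ht_succ]
      simp only [hp]
      push_cast
      field_simp
      ring
  have ht_anti : Antitone t := antitone_nat_of_succ_le fun n => by
    rw [ht_succ]
    exact mul_le_of_le_one_right (prod_nonneg fun k _ => sub_nonneg.2 (hp_le_one k))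
      (sub_le_self _ (hp_nonneg n))
  have ht_lim : Tendsto t atTop (𝓝 0) := tendsto_prod_range_one_sub_of_tendsto_sum hp_le_one
    (tendsto_sum_range_one_div_succ_mul_add_atTop ha zero_le_one)
  convert hasSum_sub_succ_of_antitone ht_anti ht_lim using 1
  · ext n
    rw [hclosed, ht_succ]
    ring
  · simp [ht]
end

section
/- Let h ∈ (0,1) and define (t_w) by t_1 = 1/(h+1) and t_w = (h(w-1)/(hw+1)) t_{w-1} for w > 1. Then Σ_{w=1}^{∞} t_w = 1. -/
/-!
Writing `u n = h (n+1) t (n+1)`, the recurrence says exactly that `t (n+2) = u n - u (n+1)`,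
and `t 1 = 1 - u 0`, so the partial sums telescope to `1 - u n` and it remains to show `u n → 0`.
The terms are nonnegative, so `u` decreases to some limit `L ≥ 0` and the series converges;
but `t (n+1) = u n / (h (n+1)) ≥ L / (h (n+1))`, so `L > 0` would contradict the divergence of
the harmonic series.
-/

open Filter Topology Finset

section Telescoping

variable {s u : ℕ → ℝ} {a : ℝ}

lemma sum_range_succ_eq_sub_of_telescoping (h0 : s 0 = a - u 0)
    (hsucc : ∀ n, s (n + 1) = u n - u (n + 1)) (n : ℕ) :
    ∑ i ∈ range (n + 1), s i = a - u n := by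
  induction n with
  | zero => simpa using h0
  | succ n ih => rw [sum_range_succ, ih, hsucc]; ring

lemma summable_of_telescoping (hs : ∀ n, 0 ≤ s n) (hu : ∀ n, 0 ≤ u n)
    (h0 : s 0 = a - u 0) (hsucc : ∀ n, s (n + 1) = u n - u (n + 1)) : Summable s := by
  refine summable_of_sum_range_le hs (c := a) fun n => ?_
  cases n with
  | zero => simp only [range_zero, sum_empty]; linarith [hs 0, hu 0]
  | succ n => rw [sum_range_succ_eq_sub_of_telescoping h0 hsucc]; linarith [hu n]

lemma hasSum_of_telescoping (hs : ∀ n, 0 ≤ s n) (h0 : s 0 = a - u 0)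
    (hsucc : ∀ n, s (n + 1) = u n - u (n + 1)) (hu : Tendsto u atTop (𝓝 0)) :
    HasSum s a := by
  rw [hasSum_iff_tendsto_nat_of_nonneg hs, ← tendsto_add_atTop_iff_nat 1]
  simp only [sum_range_succ_eq_sub_of_telescoping h0 hsucc]
  simpa using tendsto_const_nhds (x := a) |>.sub hu

end Telescoping

lemma tendsto_zero_of_antitone_of_summable_div_succ {u : ℕ → ℝ} (hanti : Antitone u)
    (hu : ∀ n, 0 ≤ u n) (hsum : Summable fun n : ℕ => u n / (n + 1)) :
    Tendsto u atTop (𝓝 0) := by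
  have hbdd : BddBelow (Set.range u) := ⟨0, Set.forall_mem_range.2 hu⟩
  have hlim := tendsto_atTop_ciInf hanti hbdd
  have hL : ⨅ n, u n = 0 := by
    refine le_antisymm (not_lt.1 fun hpos => ?_) (le_ciInf hu)
    have hcmp : Summable fun n : ℕ => (⨅ i, u i) / ((n : ℝ) + 1) :=
      hsum.of_nonneg_of_le (fun n => by positivity)
        fun n => div_le_div_of_nonneg_right (ciInf_le hbdd n) (by positivity)
    have hharm : Summable fun n : ℕ => 1 / ((n : ℝ) + 1) :=
      (hcmp.div_const (⨅ i, u i)).congr fun n => by field_simp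
    exact Real.not_summable_one_div_natCast ((summable_nat_add_iff 1).1 (by exact_mod_cast hharm))
  rwa [hL] at hlim

theorem stmt_6_general (h : ℝ) (h0 : 0 < h) (t : ℕ → ℝ)
    (ht1 : t 1 = 1 / (h + 1))
    (hrec : ∀ w : ℕ, 1 < w → t w = (h * ((w : ℝ) - 1) / (h * w + 1)) * t (w - 1)) :
    HasSum (fun w : ℕ => t (w + 1)) 1 := by
  set s : ℕ → ℝ := fun n => t (n + 1)
  set u : ℕ → ℝ := fun n => h * (n + 1) * s n
  have hstep : ∀ n : ℕ, s (n + 1) = h * (n + 1) / (h * (n + 2) + 1) * s n := fun n => by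
    simp only [s, hrec (n + 2) (by omega)]; push_cast; ring_nf
  have hs : ∀ n, 0 ≤ s n := fun n => by
    induction n with
    | zero => simp only [s, ht1]; positivity
    | succ n ih => rw [hstep]; exact mul_nonneg (by positivity) ih
  have hu : ∀ n, 0 ≤ u n := fun n => mul_nonneg (by positivity) (hs n)
  have hs0 : s 0 = 1 - u 0 := by
    simp only [u, s, zero_add, ht1, Nat.cast_zero]; field_simp; ring
  have hsucc : ∀ n, s (n + 1) = u n - u (n + 1) := fun n => by
    have : h * ((n : ℝ) + 2) + 1 ≠ 0 := by positivity
    simp only [u, hstep n]; push_cast; field_simp; ring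
  have hu_anti : Antitone u :=
    antitone_nat_of_succ_le fun n => by linarith [hsucc n, hs (n + 1)]
  have hu_div : (fun n : ℕ => u n / (n + 1)) = fun n => h * s n := by
    funext n; simp only [u]; field_simp
  have hu_lim : Tendsto u atTop (𝓝 0) :=
    tendsto_zero_of_antitone_of_summable_div_succ hu_anti hu
      (hu_div ▸ (summable_of_telescoping hs hu hs0 hsucc).mul_left h)
  exact hasSum_of_telescoping hs hs0 hsucc hu_lim

theorem stmt_6 (h : ℝ) (h0 : 0 < h) (h1 : h < 1) (t : ℕ → ℝ)
    (ht1 : t 1 = 1 / (h + 1))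
    (hrec : ∀ w : ℕ, 1 < w → t w = (h * ((w : ℝ) - 1) / (h * w + 1)) * t (w - 1)) :
    HasSum (fun w : ℕ => t (w + 1)) 1 :=
  stmt_6_general h h0 t ht1 hrec
end

section
/- Let h > 0 and define k_1 = (1−h)/(h+1), k_w = ((w−1)h/(wh+1)) k_{w−1} for w > 1, and B = 1 − h (assume 0 < h < 1). Then t_w := k_w/B satisfies t_1 = 1/(h+1), t_w = (h(w−1)/(hw+1)) t_{w−1}, and Σ_{w=1}^{∞} t_w = 1. -/
/-!
The recursion says that `t (w + 1) = c w * ∏_{i < w} (1 - c i)` with `c w = 1 / (h (w + 1) + 1)`: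
the `t`'s are the pieces of a unit stick broken successively at the proportions `c 0, c 1, …`.
The first `n` pieces therefore add up to `1 - ∏_{i < n} (1 - c i) ≥ 1 - exp (-∑_{i < n} c i)`,
which tends to `1` because `c w` is of harmonic size.
-/

open Finset Filter Topology

theorem sum_range_mul_prod_one_sub {R : Type*} [CommRing R] (c : ℕ → R) (n : ℕ) :
    ∑ i ∈ range n, c i * ∏ j ∈ range i, (1 - c j) = 1 - ∏ i ∈ range n, (1 - c i) := by
  induction n with
  | zero => simp
  | succ n ih => rw [sum_range_succ, ih, prod_range_succ]; ring

theorem tendsto_prod_one_sub_of_not_summable {c : ℕ → ℝ} (hc0 : ∀ n, 0 ≤ c n)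
    (hc1 : ∀ n, c n ≤ 1) (hc : ¬Summable c) :
    Tendsto (fun n ↦ ∏ i ∈ range n, (1 - c i)) atTop (𝓝 0) := by
  have hsum : Tendsto (fun n ↦ ∑ i ∈ range n, c i) atTop atTop :=
    (not_summable_iff_tendsto_nat_atTop_of_nonneg hc0).1 hc
  refine tendsto_of_tendsto_of_tendsto_of_le_of_le tendsto_const_nhds
    (Real.tendsto_exp_neg_atTop_nhds_zero.comp hsum)
    (fun n ↦ prod_nonneg fun i _ ↦ sub_nonneg.2 (hc1 i)) fun n ↦ ?_
  calc ∏ i ∈ range n, (1 - c i) ≤ ∏ i ∈ range n, Real.exp (-c i) :=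
        prod_le_prod (fun i _ ↦ sub_nonneg.2 (hc1 i)) fun i _ ↦ Real.one_sub_le_exp_neg (c i)
    _ = Real.exp (-∑ i ∈ range n, c i) := by rw [← sum_neg_distrib, Real.exp_sum]

theorem hasSum_mul_prod_one_sub {c : ℕ → ℝ} (hc0 : ∀ n, 0 ≤ c n) (hc1 : ∀ n, c n ≤ 1)
    (hc : ¬Summable c) :
    HasSum (fun n ↦ c n * ∏ i ∈ range n, (1 - c i)) 1 := by
  rw [hasSum_iff_tendsto_nat_of_nonneg
    (fun n ↦ mul_nonneg (hc0 n) (prod_nonneg fun i _ ↦ sub_nonneg.2 (hc1 i)))]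
  simp_rw [sum_range_mul_prod_one_sub]
  simpa using (tendsto_prod_one_sub_of_not_summable hc0 hc1 hc).const_sub 1

theorem not_summable_one_div_mul_succ_add_one {a : ℝ} (ha : 0 ≤ a) :
    ¬Summable fun n : ℕ ↦ 1 / (a * (n + 1) + 1) := by
  intro hs
  refine Real.not_summable_one_div_natCast ((summable_nat_add_iff 1).1 ?_)
  refine (hs.mul_left (a + 1)).of_nonneg_of_le (fun n ↦ by positivity) fun n ↦ ?_
  push_cast
  rw [mul_one_div, div_le_div_iff₀ (by positivity) (by positivity)]
  nlinarith

theorem eq_mul_prod_one_sub_of_rec {h : ℝ} (hh : 0 ≤ h) {t : ℕ → ℝ} (ht1 : t 1 = 1 / (h + 1))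
    (hrec : ∀ w : ℕ, 1 < w → t w = (h * ((w : ℝ) - 1) / (h * w + 1)) * t (w - 1)) (n : ℕ) :
    t (n + 1) = 1 / (h * (n + 1) + 1) * ∏ i ∈ range n, (1 - 1 / (h * (i + 1) + 1)) := by
  induction n with
  | zero => simpa using ht1
  | succ n ih =>
    rw [hrec (n + 2) (by omega), show n + 2 - 1 = n + 1 by omega, ih, prod_range_succ]
    have : h * (n + 1) + 1 ≠ 0 := by positivity
    have : h * (n + 2) + 1 ≠ 0 := by positivity
    push_cast
    field_simp
    ring

theorem stmt_16 (h : ℝ) (h0 : 0 < h) (h1 : h < 1)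
    (k : ℕ → ℝ)
    (hk1 : k 1 = (1 - h) / (h + 1))
    (hrec : ∀ w : ℕ, 1 < w → k w = (((w : ℝ) - 1) * h / (w * h + 1)) * k (w - 1))
    (B : ℝ) (hB : B = 1 - h)
    (t : ℕ → ℝ) (ht : ∀ w, t w = k w / B) :
    t 1 = 1 / (h + 1) ∧
    (∀ w : ℕ, 1 < w → t w = (h * ((w : ℝ) - 1) / (h * w + 1)) * t (w - 1)) ∧
    HasSum (fun w : ℕ => t (w + 1)) 1 := by
  have ht1 : t 1 = 1 / (h + 1) := by
    rw [ht, hk1, hB]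
    field_simp [sub_ne_zero.2 h1.ne']
  have htrec : ∀ w : ℕ, 1 < w → t w = (h * ((w : ℝ) - 1) / (h * w + 1)) * t (w - 1) := by
    intro w hw
    rw [ht, hrec w hw, ht]
    ring
  refine ⟨ht1, htrec, ?_⟩
  simp_rw [eq_mul_prod_one_sub_of_rec h0.le ht1 htrec]
  exact hasSum_mul_prod_one_sub (fun n ↦ by positivity)
    (fun n ↦ div_le_one_of_le₀ (by nlinarith) (by positivity))
    (not_summable_one_div_mul_succ_add_one h0.le)
end
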